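/- Let c > 1 and define f'(ρ) = ln((1+ρ)/(1-ρ)) - 2cρ for ρ ∈ (-1,1). Then f' has exactly three zeros in (-1,1): ρ = 0 and ±ρ_c for some ρ_c ∈ (0,1), i.e., the associated potential is a double well. -/

import Mathlib

/-! Write `g` for `f'`. It is odd, and `g'(ρ) = 2 / (1 - ρ²) - 2c` is negative on `[0, ρ*)` and
positive on `(ρ*, 1)`, where `ρ* = √(1 - 1/c) > 0`. Hence `g` is negative on `(0, ρ*]`, and since
`g (tanh c) = 2c (1 - tanh c) > 0` it has exactly one zero `ρc ∈ (ρ*, 1)` in `(0, 1)`; oddness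
gives the remaining zeros `0` and `-ρc`. -/

open Set Real

section ZeroSets

variable {g : ℝ → ℝ}

theorem sep_Ioo_eq_singleton_of_strictAntiOn_of_strictMonoOn {a s b : ℝ} (has : a < s)
    (ha : g a = 0) (hanti : StrictAntiOn g (Icc a s)) (hmono : StrictMonoOn g (Ico s b))
    (hcont : ContinuousOn g (Ico s b)) (hpos : ∃ y ∈ Ioo a b, 0 < g y) :
    ∃ r ∈ Ioo s b, {x ∈ Ioo a b | g x = 0} = {r} := by
  have hneg : ∀ x ∈ Ioc a s, g x < 0 := fun x hx =>
    ha ▸ hanti (left_mem_Icc.2 has.le) ⟨hx.1.le, hx.2⟩ hx.1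
  obtain ⟨y, hy, hgy⟩ := hpos
  have hsy : s < y := not_le.1 fun h => (hneg y ⟨hy.1, h⟩).not_gt hgy
  obtain ⟨r, hr, hgr⟩ := intermediate_value_Ioo hsy.le
    (hcont.mono (Icc_subset_Ico_right hy.2)) ⟨hneg s ⟨has, le_rfl⟩, hgy⟩
  have hrb : r < b := hr.2.trans hy.2
  refine ⟨r, ⟨hr.1, hrb⟩, Subset.antisymm ?_ ?_⟩
  · rintro x ⟨hx, hgx⟩
    have hsx : s < x := not_le.1 fun h => (hneg x ⟨hx.1, h⟩).ne hgx
    exact hmono.injOn ⟨hsx.le, hx.2⟩ ⟨hr.1.le, hrb⟩ (hgx.trans hgr.symm)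
  · rintro x rfl
    exact ⟨⟨has.trans hr.1, hrb⟩, hgr⟩

theorem Function.Odd.sep_Ioo_eq_of_sep_Ioo_zero (hg : g.Odd) {b r : ℝ}
    (h : {x ∈ Ioo 0 b | g x = 0} = {r}) :
    {x ∈ Ioo (-b) b | g x = 0} = {-r, 0, r} := by
  have hmem (x : ℝ) : (x ∈ Ioo 0 b ∧ g x = 0) ↔ x = r := Set.ext_iff.1 h x
  obtain ⟨⟨hr0, hrb⟩, hgr⟩ := (hmem r).2 rfl
  ext x
  simp only [mem_ofPred_eq, mem_insert_iff, mem_singleton_iff, mem_Ioo]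
  constructor
  · rintro ⟨hx, hgx⟩
    rcases lt_trichotomy x 0 with hx0 | hx0 | hx0
    · refine Or.inl (neg_eq_iff_eq_neg.1 ((hmem (-x)).1 ⟨⟨by linarith, by linarith⟩, ?_⟩))
      rw [hg.eq, hgx, neg_zero]
    · exact Or.inr (Or.inl hx0)
    · exact Or.inr (Or.inr ((hmem x).1 ⟨⟨hx0, hx.2⟩, hgx⟩))
  · rintro (rfl | rfl | rfl)
    · exact ⟨⟨by linarith, by linarith⟩, by rw [hg.eq, hgr, neg_zero]⟩
    · exact ⟨⟨by linarith, by linarith⟩, hg.map_zero⟩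
    · exact ⟨⟨by linarith, hrb⟩, hgr⟩

end ZeroSets

theorem Real.sqrt_one_sub_inv_lt_one {c : ℝ} (hc : 0 < c) : √(1 - c⁻¹) < 1 := by
  rw [sqrt_lt' one_pos]
  linarith [inv_pos.2 hc]

noncomputable def logPotentialDeriv (c x : ℝ) : ℝ := log ((1 + x) / (1 - x)) - 2 * c * x

section logPotentialDeriv

variable {c : ℝ}

theorem odd_logPotentialDeriv (c : ℝ) : (logPotentialDeriv c).Odd := fun x => by
  rw [logPotentialDeriv, logPotentialDeriv, sub_neg_eq_add, ← inv_div, log_inv]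
  ring_nf

theorem hasDerivAt_logPotentialDeriv {x : ℝ} (hx : x ∈ Ioo (-1) 1) :
    HasDerivAt (logPotentialDeriv c) (2 / (1 - x ^ 2) - 2 * c) x := by
  have h₁ : 1 + x ≠ 0 := by linarith [hx.1]
  have h₂ : 1 - x ≠ 0 := by linarith [hx.2]
  have h₃ : 1 - x ^ 2 ≠ 0 := by nlinarith [hx.1, hx.2]
  have hq : HasDerivAt (fun y => (1 + y) / (1 - y)) (2 / (1 - x) ^ 2) x :=
    (((hasDerivAt_id' x).const_add 1).div ((hasDerivAt_id' x).const_sub 1) h₂).congr_deriv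
      (by ring)
  refine ((hq.log (div_ne_zero h₁ h₂)).sub ((hasDerivAt_id x).const_mul (2 * c))).congr_deriv ?_
  field_simp
  ring

theorem continuousOn_logPotentialDeriv : ContinuousOn (logPotentialDeriv c) (Ioo (-1) 1) :=
  fun _ hx => (hasDerivAt_logPotentialDeriv hx).continuousAt.continuousWithinAt

theorem strictAntiOn_logPotentialDeriv (hc : 0 < c) :
    StrictAntiOn (logPotentialDeriv c) (Icc 0 √(1 - c⁻¹)) := by
  have hsub : Icc 0 √(1 - c⁻¹) ⊆ Ioo (-1) 1 := fun x hx =>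
    ⟨by linarith [hx.1], hx.2.trans_lt (sqrt_one_sub_inv_lt_one hc)⟩
  refine strictAntiOn_of_hasDerivWithinAt_neg (convex_Icc _ _)
    (continuousOn_logPotentialDeriv.mono hsub)
    (fun x hx => (hasDerivAt_logPotentialDeriv (hsub (interior_subset hx))).hasDerivWithinAt)
    fun x hx => ?_
  rw [interior_Icc] at hx
  have hx2 : x ^ 2 < 1 - c⁻¹ := (lt_sqrt hx.1.le).1 hx.2
  have hcx : c * x ^ 2 < c - 1 := by
    have := mul_lt_mul_of_pos_left hx2 hc
    rwa [mul_sub, mul_one, mul_inv_cancel₀ hc.ne'] at this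
  rw [sub_neg, div_lt_iff₀ (by linarith [inv_pos.2 hc])]
  linarith

theorem strictMonoOn_logPotentialDeriv (hc : 0 < c) :
    StrictMonoOn (logPotentialDeriv c) (Ico √(1 - c⁻¹) 1) := by
  have hsub : Ico √(1 - c⁻¹) 1 ⊆ Ioo (-1) 1 := fun x hx =>
    ⟨by linarith [hx.1, sqrt_nonneg (1 - c⁻¹)], hx.2⟩
  refine strictMonoOn_of_hasDerivWithinAt_pos (convex_Ico _ _)
    (continuousOn_logPotentialDeriv.mono hsub)
    (fun x hx => (hasDerivAt_logPotentialDeriv (hsub (interior_subset hx))).hasDerivWithinAt)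
    fun x hx => ?_
  rw [interior_Ico] at hx
  have hx0 : 0 < x := (sqrt_nonneg _).trans_lt hx.1
  have hx2 : 1 - c⁻¹ < x ^ 2 := (sqrt_lt' hx0).1 hx.1
  have hcx : c - 1 < c * x ^ 2 := by
    have := mul_lt_mul_of_pos_left hx2 hc
    rwa [mul_sub, mul_one, mul_inv_cancel₀ hc.ne'] at this
  rw [sub_pos, lt_div_iff₀ (by nlinarith [hx.2])]
  linarith

theorem logPotentialDeriv_tanh (c : ℝ) :
    logPotentialDeriv c (tanh c) = 2 * c * (1 - tanh c) := by
  have h := artanh_eq_half_log ⟨(neg_one_lt_tanh c).le, (tanh_lt_one c).le⟩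
  rw [artanh_tanh] at h
  rw [logPotentialDeriv, show log ((1 + tanh c) / (1 - tanh c)) = 2 * c by linarith]
  ring

end logPotentialDeriv

theorem stmt_11 (c : ℝ) (hc : 1 < c) (f' : ℝ → ℝ)
    (hf' : ∀ ρ ∈ Set.Ioo (-1:ℝ) 1, f' ρ = Real.log ((1 + ρ) / (1 - ρ)) - 2 * c * ρ) :
    ∃ ρc ∈ Set.Ioo (0:ℝ) 1,
      {ρ ∈ Set.Ioo (-1:ℝ) 1 | f' ρ = 0} = {-ρc, 0, ρc} := by
  have hc₀ : 0 < c := zero_lt_one.trans hc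
  have hs : 0 < √(1 - c⁻¹) := sqrt_pos.2 (sub_pos.2 (inv_lt_one_of_one_lt₀ hc))
  have hg_tanh : 0 < logPotentialDeriv c (tanh c) := by
    rw [logPotentialDeriv_tanh]
    exact mul_pos (by positivity) (sub_pos.2 (tanh_lt_one c))
  have htanh₀ : 0 < tanh c := by
    rw [tanh_eq_sinh_div_cosh]
    exact div_pos (sinh_pos_iff.2 hc₀) (cosh_pos c)
  obtain ⟨r, hr, hzeros⟩ := sep_Ioo_eq_singleton_of_strictAntiOn_of_strictMonoOn hs
    (odd_logPotentialDeriv c).map_zero (strictAntiOn_logPotentialDeriv hc₀)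
    (strictMonoOn_logPotentialDeriv hc₀)
    (continuousOn_logPotentialDeriv.mono fun x hx => ⟨by linarith [hx.1], hx.2⟩)
    ⟨tanh c, ⟨htanh₀, tanh_lt_one c⟩, hg_tanh⟩
  refine ⟨r, ⟨hs.trans hr.1, hr.2⟩, ?_⟩
  rw [← (odd_logPotentialDeriv c).sep_Ioo_eq_of_sep_Ioo_zero hzeros]
  exact sep_ext_iff.2 fun ρ hρ => by rw [hf' ρ hρ, logPotentialDeriv]
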